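/- Let ℓ ∈ [0,2], θ ∈ [0,π], φ = arccos(ℓ/2), and let e₁, e₂, e₃, e₄ be the edge vectors of P₄(ℓ,θ) (eᵢ = v_{i+1} − vᵢ, indices mod 4). Then the sum of the four angles between consecutive edges satisfies ∠(e₁,e₂) + ∠(e₂,e₃) + ∠(e₃,e₄) + ∠(e₄,e₁) = 2·arccos(−cos²φ − sin²φ·cos θ) + 4φ = 2·arccos(−ℓ²/4 − (1−ℓ²/4)·cos θ) + 2·arccos(ℓ²/2 − 1), where ∠(u,w) denotes the angle between nonzero vectors u and w in ℝ³ (the arccosine of their normalized inner product). -/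

import Mathlib

open Real

/-- The vertices of the equilateral spatial quadrilateral `P₄(ℓ,θ)` in `ℝ³`,
with `φ = arccos(ℓ/2)`:
`v₁ = (0,0,0)`, `v₂ = (cos φ, sin φ, 0)`, `v₃ = (2cos φ, 0, 0)`,
`v₄ = (cos φ, sin φ cos θ, sin φ sin θ)`. -/
noncomputable def vtx (ℓ θ : ℝ) : Fin 4 → EuclideanSpace ℝ (Fin 3) := fun k =>
  (WithLp.equiv 2 (Fin 3 → ℝ)).symm
    (![![0, 0, 0],
       ![Real.cos (Real.arccos (ℓ / 2)), Real.sin (Real.arccos (ℓ / 2)), 0],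
       ![2 * Real.cos (Real.arccos (ℓ / 2)), 0, 0],
       ![Real.cos (Real.arccos (ℓ / 2)),
         Real.sin (Real.arccos (ℓ / 2)) * Real.cos θ,
         Real.sin (Real.arccos (ℓ / 2)) * Real.sin θ]] k)

/-- The edge vectors `eᵢ = v_{i+1} − vᵢ` (indices mod 4) of `P₄(ℓ,θ)`. -/
noncomputable def edg (ℓ θ : ℝ) : Fin 4 → EuclideanSpace ℝ (Fin 3) := fun k =>
  vtx ℓ θ (k + 1) - vtx ℓ θ k

/-! The edges are unit vectors, so each angle is the arccosine of an inner product. The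
inner products of consecutive edges alternate between `cos² φ - sin² φ = cos 2φ` (at `v₂` and
`v₄`) and `-cos² φ - sin² φ cos θ` (at `v₁` and `v₃`), and `arccos (cos 2φ) = 2φ` since
`φ = arccos (ℓ/2) ∈ [0, π/2]` for `ℓ ∈ [0, 2]`. -/

open InnerProductGeometry RealInnerProductSpace

lemma angle_eq_arccos_inner_of_norm_eq_one {V : Type*} [NormedAddCommGroup V]
    [InnerProductSpace ℝ V] {x y : V} (hx : ‖x‖ = 1) (hy : ‖y‖ = 1) :
    angle x y = arccos ⟪x, y⟫ := by
  simp [angle, hx, hy]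

lemma arccos_two_mul_sq_sub_one {x : ℝ} (h₀ : 0 ≤ x) (h₁ : x ≤ 1) :
    arccos (2 * x ^ 2 - 1) = 2 * arccos x := by
  have hcos : 2 * x ^ 2 - 1 = cos (2 * arccos x) := by
    rw [cos_two_mul, cos_arccos (by linarith) h₁]
  rw [hcos, arccos_cos (by linarith [arccos_nonneg x])
    (by linarith [arccos_le_pi_div_two.2 h₀])]

lemma inner_toLp_fin_three (a b c d e f : ℝ) :
    ⟪!₂[a, b, c], !₂[d, e, f]⟫ = a * d + b * e + c * f := by
  simp only [EuclideanSpace.inner_toLp_toLp, dotProduct, Pi.star_apply, star_trivial,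
    Fin.sum_univ_three, Matrix.cons_val]
  ring

lemma edg_eq (ℓ θ : ℝ) :
    edg ℓ θ = ![!₂[cos (arccos (ℓ / 2)), sin (arccos (ℓ / 2)), 0],
      !₂[cos (arccos (ℓ / 2)), -sin (arccos (ℓ / 2)), 0],
      !₂[-cos (arccos (ℓ / 2)), sin (arccos (ℓ / 2)) * cos θ, sin (arccos (ℓ / 2)) * sin θ],
      !₂[-cos (arccos (ℓ / 2)), -(sin (arccos (ℓ / 2)) * cos θ),
        -(sin (arccos (ℓ / 2)) * sin θ)]] := by
  ext k i
  fin_cases k <;> fin_cases i <;> simp [edg, vtx] <;> ring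

lemma norm_edg (ℓ θ : ℝ) (k : Fin 4) : ‖edg ℓ θ k‖ = 1 := by
  have hφ := sin_sq_add_cos_sq (arccos (ℓ / 2))
  have hθ := sin_sq_add_cos_sq θ
  rw [norm_eq_sqrt_real_inner, sqrt_eq_one, edg_eq]
  fin_cases k <;> simp only [Fin.zero_eta, Fin.mk_one, Fin.reduceFinMk, Matrix.cons_val,
    inner_toLp_fin_three]
  · linear_combination hφ
  · linear_combination hφ
  · linear_combination hφ + sin (arccos (ℓ / 2)) ^ 2 * hθ
  · linear_combination hφ + sin (arccos (ℓ / 2)) ^ 2 * hθ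

lemma inner_edg_edg_succ (ℓ θ : ℝ) (k : Fin 4) :
    ⟪edg ℓ θ k, edg ℓ θ (k + 1)⟫ =
      ![cos (arccos (ℓ / 2)) ^ 2 - sin (arccos (ℓ / 2)) ^ 2,
        -cos (arccos (ℓ / 2)) ^ 2 - sin (arccos (ℓ / 2)) ^ 2 * cos θ,
        cos (arccos (ℓ / 2)) ^ 2 - sin (arccos (ℓ / 2)) ^ 2,
        -cos (arccos (ℓ / 2)) ^ 2 - sin (arccos (ℓ / 2)) ^ 2 * cos θ] k := by
  rw [edg_eq]
  fin_cases k <;> simp only [Fin.zero_eta, Fin.mk_one, Fin.reduceFinMk, Fin.reduceAdd,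
    Matrix.cons_val, inner_toLp_fin_three]
  · ring
  · ring
  · linear_combination -sin (arccos (ℓ / 2)) ^ 2 * sin_sq_add_cos_sq θ
  · ring

lemma sum_angle_edg_edg_succ (ℓ θ : ℝ) :
    ∑ k : Fin 4, angle (edg ℓ θ k) (edg ℓ θ (k + 1)) =
      2 * arccos (cos (arccos (ℓ / 2)) ^ 2 - sin (arccos (ℓ / 2)) ^ 2) +
        2 * arccos (-cos (arccos (ℓ / 2)) ^ 2 - sin (arccos (ℓ / 2)) ^ 2 * cos θ) := by
  simp only [angle_eq_arccos_inner_of_norm_eq_one (norm_edg ℓ θ _) (norm_edg ℓ θ _),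
    inner_edg_edg_succ, Fin.sum_univ_four, Matrix.cons_val]
  ring

theorem sum_angles_eq_general (ℓ θ : ℝ) (hℓ : ℓ ∈ Set.Icc (0 : ℝ) 2) :
    (∑ k : Fin 4, InnerProductGeometry.angle (edg ℓ θ k) (edg ℓ θ (k + 1)) =
      2 * Real.arccos (-(Real.cos (Real.arccos (ℓ / 2))) ^ 2 -
          (Real.sin (Real.arccos (ℓ / 2))) ^ 2 * Real.cos θ) +
        4 * Real.arccos (ℓ / 2)) ∧
    (∑ k : Fin 4, InnerProductGeometry.angle (edg ℓ θ k) (edg ℓ θ (k + 1)) =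
      2 * Real.arccos (-ℓ ^ 2 / 4 - (1 - ℓ ^ 2 / 4) * Real.cos θ) +
        2 * Real.arccos (ℓ ^ 2 / 2 - 1)) := by
  obtain ⟨hℓ₀, hℓ₂⟩ := hℓ
  have hcos : cos (arccos (ℓ / 2)) ^ 2 = (ℓ / 2) ^ 2 := by
    rw [cos_arccos (by linarith) (by linarith)]
  have hsin : sin (arccos (ℓ / 2)) ^ 2 = 1 - (ℓ / 2) ^ 2 := by rw [sin_sq, hcos]
  have hdouble : arccos (ℓ ^ 2 / 2 - 1) = 2 * arccos (ℓ / 2) := by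
    rw [← arccos_two_mul_sq_sub_one (by linarith) (by linarith)]
    congr 1
    ring
  have hcos_two_mul : arccos (cos (arccos (ℓ / 2)) ^ 2 - sin (arccos (ℓ / 2)) ^ 2) =
      2 * arccos (ℓ / 2) := by
    rw [hcos, hsin, ← hdouble]
    congr 1
    ring
  rw [sum_angle_edg_edg_succ, hcos_two_mul]
  constructor
  · ring
  · rw [hcos, hsin, hdouble]
    ring_nf

/-- The total curvature of `P₄(ℓ,θ)`, i.e. the sum of the angles between
consecutive edge vectors, equals
`2 arccos(−cos²φ − sin²φ cos θ) + 4φ`, which in turn equals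
`2 arccos(−ℓ²/4 − (1−ℓ²/4) cos θ) + 2 arccos(ℓ²/2 − 1)`. -/
theorem sum_angles_eq (ℓ θ : ℝ) (hℓ : ℓ ∈ Set.Icc (0 : ℝ) 2)
    (hθ : θ ∈ Set.Icc (0 : ℝ) Real.pi) :
    (∑ k : Fin 4, InnerProductGeometry.angle (edg ℓ θ k) (edg ℓ θ (k + 1)) =
      2 * Real.arccos (-(Real.cos (Real.arccos (ℓ / 2))) ^ 2 -
          (Real.sin (Real.arccos (ℓ / 2))) ^ 2 * Real.cos θ) +
        4 * Real.arccos (ℓ / 2)) ∧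
    (∑ k : Fin 4, InnerProductGeometry.angle (edg ℓ θ k) (edg ℓ θ (k + 1)) =
      2 * Real.arccos (-ℓ ^ 2 / 4 - (1 - ℓ ^ 2 / 4) * Real.cos θ) +
        2 * Real.arccos (ℓ ^ 2 / 2 - 1)) :=
  sum_angles_eq_general ℓ θ hℓ
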